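/- arXiv:1502.03727 — 5 statements merged into one kernel-verified Lean document; each statement's English description precedes it below -/
import Mathlib

section
/- For every integer n ≥ 2 and every real β, the finite-volume pressure of the continuous Mallows model satisfies p_n(β) = (1/n) · ln([n]_q! / n!) evaluated at q = exp(−β/(n−1)). -/
open MeasureTheory Real Set Filter

noncomputable section

/-- Lebesgue measure on `[0,1]` (as a measure on `ℝ`). -/
def lamI : Measure ℝ := volume.restrict (Set.Icc (0:ℝ) 1)

/-- Lebesgue measure on `[0,1]²` (as a measure on `ℝ × ℝ`). -/
def lam2 : Measure (ℝ × ℝ) := lamI.prod lamI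

/-- The pair interaction `h((x₁,y₁),(x₂,y₂))`. -/
def hfun (p q : ℝ × ℝ) : ℝ := if (p.1 - q.1) * (p.2 - q.2) < 0 then 1 else 0

/-- The Hamiltonian `H_n`. -/
def HM (n : ℕ) (x : Fin n → ℝ × ℝ) : ℝ :=
  (1 / ((n : ℝ) - 1)) * ∑ i : Fin n, ∑ j : Fin n, if i < j then hfun (x i) (x j) else 0

/-- The partition function `Z_n(β)`. -/
def ZM (n : ℕ) (β : ℝ) : ℝ :=
  ∫ x : Fin n → ℝ × ℝ, Real.exp (-β * HM n x) ∂(Measure.pi fun _ : Fin n => lam2)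

/-- The finite-volume pressure `p_n(β)`. -/
def pN (n : ℕ) (β : ℝ) : ℝ := (1 / (n : ℝ)) * Real.log (ZM n β)

/-- The `q`-integer `[k]_q`. -/
def qInt (k : ℕ) (q : ℝ) : ℝ := if q = 1 then (k : ℝ) else (1 - q ^ k) / (1 - q)

/-- The `q`-factorial `[n]_q!`. -/
def qFactorial (n : ℕ) (q : ℝ) : ℝ := ∏ k ∈ Finset.range n, qInt (k + 1) q

/-!
With `q = exp (-β / (n - 1))` the Boltzmann weight is `exp (-β H_n) = q ^ D(x, y)`, where `D`
counts the discordant pairs of the coordinate tuples `x` and `y`. Almost surely both tuples are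
injective; sorting them then shows that, as `σ` runs over the permutations, `D(x, y ∘ σ)` runs over
the inversion numbers of all permutations, so `∑_σ q ^ D(x, y ∘ σ) = ∑_ρ q ^ inv ρ = [n]_q!`
(the generating function of inversions, obtained by recording the value of `ρ 0`). Since
`y ↦ y ∘ σ` preserves the product measure, each summand integrates to `Z_n`, so `n! Z_n = [n]_q!`.
-/

open Finset

section PairCount

variable {ι : Type*} [Fintype ι] [LinearOrder ι]

def pairCount (r : ι → ι → Prop) [DecidableRel r] : ℕ := ∑ i, #{j | i < j ∧ r i j}

theorem two_mul_pairCount (r : ι → ι → Prop) [DecidableRel r] [Std.Symm r] :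
    2 * pairCount r = ∑ i, #{j | i ≠ j ∧ r i j} := by
  have hswap : ∑ i, #{j | j < i ∧ r i j} = pairCount r := by
    simp only [pairCount, card_filter]
    rw [Finset.sum_comm]
    refine Finset.sum_congr rfl fun i _ => Finset.sum_congr rfl fun j _ => ?_
    simp only [Std.Symm.iff (r := r) j i]
  rw [two_mul]
  nth_rewrite 2 [← hswap]
  simp only [pairCount, card_filter, ← Finset.sum_add_distrib]
  refine Finset.sum_congr rfl fun i _ => Finset.sum_congr rfl fun j _ => ?_
  rcases lt_trichotomy i j with h | rfl | h
  · simp [h, h.ne, not_lt_of_gt h]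
  · simp
  · simp [h, h.ne', not_lt_of_gt h]

theorem pairCount_comp_equiv (r : ι → ι → Prop) [DecidableRel r] [Std.Symm r] (τ : ι ≃ ι) :
    pairCount (fun i j => r (τ i) (τ j)) = pairCount r := by
  have : Std.Symm fun i j => r (τ i) (τ j) := ⟨fun _ _ => Std.Symm.symm _ _⟩
  refine Nat.eq_of_mul_eq_mul_left two_pos ?_
  rw [two_mul_pairCount r, two_mul_pairCount, ← τ.sum_comp fun i => #{j | i ≠ j ∧ r i j}]
  refine Finset.sum_congr rfl fun i _ => ?_
  rw [card_filter, card_filter, ← τ.sum_comp fun j => if τ i ≠ j ∧ r (τ i) j then 1 else 0]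
  simp only [τ.injective.ne_iff]

theorem pairCount_le (r : ι → ι → Prop) [DecidableRel r] :
    pairCount r ≤ Fintype.card ι * Fintype.card ι :=
  (sum_le_sum fun _ _ => card_filter_le _ _).trans_eq (by simp)

end PairCount

section Discordance

variable {ι : Type*} [Fintype ι] [LinearOrder ι]

def invCount {α : Type*} [LinearOrder α] (z : ι → α) : ℕ := pairCount fun i j => z j < z i

def discordCount (x y : ι → ℝ) : ℕ := pairCount fun i j => (x i - x j) * (y i - y j) < 0

theorem invCount_strictMono_comp {α β : Type*} [LinearOrder α] [LinearOrder β] {f : α → β}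
    (hf : StrictMono f) (z : ι → α) : invCount (f ∘ z) = invCount z := by
  simp only [invCount, Function.comp_apply, hf.lt_iff_lt]

theorem discordCount_comp_equiv (x y : ι → ℝ) (τ : ι ≃ ι) :
    discordCount (x ∘ τ) (y ∘ τ) = discordCount x y :=
  have : Std.Symm fun i j => (x i - x j) * (y i - y j) < 0 :=
    ⟨fun i j h => by linarith [show (x j - x i) * (y j - y i) = (x i - x j) * (y i - y j) by ring]⟩
  pairCount_comp_equiv (fun i j => (x i - x j) * (y i - y j) < 0) τ

theorem discordCount_of_strictMono {x : ι → ℝ} (hx : StrictMono x) (y : ι → ℝ) :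
    discordCount x y = invCount y := by
  refine sum_congr rfl fun i _ =>
    congrArg card (filter_congr fun j _ => and_congr_right fun hij => ?_)
  have hxij : x i - x j < 0 := sub_neg.2 (hx hij)
  simp [mul_neg_iff, hxij, hxij.not_gt]

theorem discordCount_comp_perm {n : ℕ} {x y : Fin n → ℝ} (hx : Function.Injective x)
    (hy : Function.Injective y) (σ : Equiv.Perm (Fin n)) :
    discordCount x (y ∘ σ) = invCount ⇑((Tuple.sort y)⁻¹ * σ * Tuple.sort x) := by
  set s := Tuple.sort x
  set t := Tuple.sort y
  have hxs : StrictMono (x ∘ s) :=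
    (Tuple.monotone_sort x).strictMono_of_injective (hx.comp s.injective)
  have hyt : StrictMono (y ∘ t) :=
    (Tuple.monotone_sort y).strictMono_of_injective (hy.comp t.injective)
  calc discordCount x (y ∘ σ) = discordCount (x ∘ s) (y ∘ σ ∘ s) :=
        (discordCount_comp_equiv _ _ s).symm
    _ = invCount (y ∘ σ ∘ s) := discordCount_of_strictMono hxs _
    _ = invCount ((y ∘ t) ∘ ⇑(t⁻¹ * σ * s)) := by
        congr 1; ext i; simp
    _ = invCount ⇑(t⁻¹ * σ * s) := invCount_strictMono_comp hyt _

theorem sum_pow_discordCount_comp_perm {n : ℕ} (q : ℝ) {x y : Fin n → ℝ}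
    (hx : Function.Injective x) (hy : Function.Injective y) :
    ∑ σ : Equiv.Perm (Fin n), q ^ discordCount x (y ∘ σ)
      = ∑ ρ : Equiv.Perm (Fin n), q ^ invCount ⇑ρ := by
  simp_rw [discordCount_comp_perm hx hy]
  exact ((Equiv.mulLeft _).trans (Equiv.mulRight _)).sum_comp
    fun ρ : Equiv.Perm (Fin n) => q ^ invCount ⇑ρ

end Discordance

theorem qInt_eq_sum_pow (k : ℕ) (q : ℝ) : qInt k q = ∑ i ∈ range k, q ^ i := by
  rcases eq_or_ne q 1 with rfl | hq
  · simp [qInt]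
  · rw [qInt, if_neg hq, geom_sum_eq hq, ← neg_div_neg_eq, neg_sub, neg_sub]

namespace Equiv.Perm

variable {n : ℕ}

def consSuccAbove (p : Fin (n + 1)) (e : Perm (Fin n)) : Perm (Fin (n + 1)) :=
  Equiv.ofBijective (Fin.cons p (p.succAbove ∘ e)) <| Finite.injective_iff_bijective.1 <|
    Fin.cons_injective_of_injective (by simp)
      (Fin.succAbove_right_injective.comp e.injective)

@[simp] theorem consSuccAbove_zero (p : Fin (n + 1)) (e : Perm (Fin n)) :
    consSuccAbove p e 0 = p := rfl

@[simp] theorem consSuccAbove_succ (p : Fin (n + 1)) (e : Perm (Fin n)) (i : Fin n) :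
    consSuccAbove p e i.succ = p.succAbove (e i) := rfl

theorem invCount_consSuccAbove (p : Fin (n + 1)) (e : Perm (Fin n)) :
    invCount ⇑(consSuccAbove p e) = p + invCount ⇑e := by
  have hzero : #{j | 0 < j ∧ consSuccAbove p e j < p} = p := by
    rw [Fin.card_filter_univ_succ]
    simp only [lt_self_iff_false, false_and, if_false, Fin.succ_pos, true_and,
      consSuccAbove_succ, Fin.succAbove_lt_iff_castSucc_lt]
    rw [card_filter, Equiv.sum_comp e fun k : Fin n => if k.castSucc < p then 1 else 0,
      ← card_filter]
    simpa [Fin.lt_def, Nat.lt_succ_iff.1 p.isLt] using Fin.card_filter_val_lt (n := n) (m := p)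
  rw [invCount, pairCount, Fin.sum_univ_succ, consSuccAbove_zero, hzero]
  congr 1
  refine sum_congr rfl fun i _ => ?_
  rw [Fin.card_filter_univ_succ]
  simp [Fin.succAbove_lt_succAbove_iff]

theorem bijective_consSuccAbove :
    Function.Bijective fun pe : Fin (n + 1) × Perm (Fin n) => consSuccAbove pe.1 pe.2 := by
  refine (Fintype.bijective_iff_injective_and_card _).2 ⟨?_, ?_⟩
  · rintro ⟨p, e⟩ ⟨p', e'⟩ h
    obtain rfl : p = p' := by simpa using DFunLike.congr_fun h 0
    refine Prod.ext rfl (Equiv.ext fun i => p.succAbove_right_injective ?_)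
    simpa using DFunLike.congr_fun h i.succ
  · simp [Fintype.card_perm, Nat.factorial_succ]

end Equiv.Perm

theorem sum_pow_invCount (n : ℕ) (q : ℝ) :
    ∑ ρ : Equiv.Perm (Fin n), q ^ invCount ⇑ρ = qFactorial n q := by
  induction n with
  | zero => simp [qFactorial, invCount, pairCount]
  | succ n ih =>
    rw [← Equiv.Perm.bijective_consSuccAbove.sum_comp, Fintype.sum_prod_type]
    simp only [Equiv.Perm.invCount_consSuccAbove, pow_add, ← mul_sum, ← sum_mul, ih,
      qFactorial, prod_range_succ, qInt_eq_sum_pow, Fin.sum_univ_eq_sum_range (q ^ ·)]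
    ring

namespace MeasureTheory.Measure

variable {ι α : Type*} [Fintype ι] [MeasurableSpace α] [MeasurableEq α] (μ : ι → Measure α)
  [∀ i, SigmaFinite (μ i)] [∀ i, NullSingletonClass (μ i)]

theorem pi_setOf_eval_eq_eval {i j : ι} (hij : i ≠ j) : Measure.pi μ {f | f i = f j} = 0 := by
  classical
  have hji : j ≠ i := hij.symm
  have hpre : {f : ι → α | f i = f j} = MeasurableEquiv.piEquivPiSubtypeProd (fun _ => α) (· = i)
      ⁻¹' {uv | uv.2 ⟨j, hji⟩ = uv.1 ⟨i, rfl⟩} := Set.ext fun _ => eq_comm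
  have hmeas : MeasurableSet {uv : ({k // k = i} → α) × ({k // k ≠ i} → α) |
      uv.2 ⟨j, hji⟩ = uv.1 ⟨i, rfl⟩} := measurableSet_eq_fun (by fun_prop) (by fun_prop)
  rw [hpre, (measurePreserving_piEquivPiSubtypeProd μ _).measure_preimage hmeas.nullMeasurableSet]
  exact measure_prod_null_of_ae_null hmeas
    (ae_of_all _ fun u => pi_hyperplane (fun k : {k // k ≠ i} => μ k) ⟨j, hji⟩ (u ⟨i, rfl⟩))

theorem ae_injective_pi : ∀ᵐ f ∂Measure.pi μ, Function.Injective f := by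
  have hpair : ∀ i j, ∀ᵐ f ∂Measure.pi μ, f i = f j → i = j := by
    intro i j
    by_cases hij : i = j
    · exact ae_of_all _ fun _ _ => hij
    · filter_upwards [measure_eq_zero_iff_ae_notMem.1 (pi_setOf_eval_eq_eval μ hij)] with f hf
      exact fun h => absurd h hf
  exact (ae_all_iff.2 fun i => ae_all_iff.2 (hpair i)).mono fun f hf i j => hf i j

end MeasureTheory.Measure

section Integral

variable {ι : Type*} [Fintype ι]

theorem measurePreserving_comp_perm_snd (μ ν : Measure ℝ) [SigmaFinite μ] [SigmaFinite ν]
    (σ : Equiv.Perm ι) :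
    MeasurePreserving (fun xy : (ι → ℝ) × (ι → ℝ) => (xy.1, xy.2 ∘ σ))
      ((Measure.pi fun _ => μ).prod (Measure.pi fun _ => ν))
      ((Measure.pi fun _ => μ).prod (Measure.pi fun _ => ν)) :=
  (MeasurePreserving.id _).prod
    (measurePreserving_arrowCongr' (fun _ => ν) (fun _ => ν) σ.symm (MeasurableEquiv.refl ℝ)
      fun _ => MeasurePreserving.id ν)

omit [Fintype ι] in
theorem measurableEmbedding_comp_perm_snd (σ : Equiv.Perm ι) :
    MeasurableEmbedding fun xy : (ι → ℝ) × (ι → ℝ) => (xy.1, xy.2 ∘ σ) :=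
  ((MeasurableEquiv.refl _).prodCongr
    (MeasurableEquiv.arrowCongr' σ.symm (MeasurableEquiv.refl ℝ))).measurableEmbedding

variable [LinearOrder ι]

theorem measurable_discordCount :
    Measurable fun xy : (ι → ℝ) × (ι → ℝ) => discordCount xy.1 xy.2 := by
  simp only [discordCount, pairCount, card_filter]
  refine Finset.measurable_sum _ fun i _ => Finset.measurable_sum _ fun j _ => ?_
  by_cases hij : i < j
  · simp only [hij, true_and]
    exact Measurable.ite (measurableSet_lt (by fun_prop) measurable_const) measurable_const
      measurable_const
  · simp only [hij, false_and, if_false, measurable_const]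

theorem integrable_pow_discordCount (P : Measure ((ι → ℝ) × (ι → ℝ))) [IsFiniteMeasure P]
    (q : ℝ) : Integrable (fun xy => q ^ discordCount xy.1 xy.2) P := by
  refine Integrable.of_bound (measurable_from_nat.comp measurable_discordCount).aestronglyMeasurable
    (max 1 |q| ^ (Fintype.card ι * Fintype.card ι)) (ae_of_all _ fun xy => ?_)
  calc ‖q ^ discordCount xy.1 xy.2‖ = |q| ^ discordCount xy.1 xy.2 := by simp
    _ ≤ max 1 |q| ^ discordCount xy.1 xy.2 := pow_le_pow_left₀ (abs_nonneg q) (le_max_right _ _) _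
    _ ≤ max 1 |q| ^ (Fintype.card ι * Fintype.card ι) :=
        pow_le_pow_right₀ (le_max_left _ _) (pairCount_le _)

end Integral

theorem integral_pow_discordCount {n : ℕ} (μ ν : Measure ℝ) [IsProbabilityMeasure μ]
    [IsProbabilityMeasure ν] [NullSingletonClass μ] [NullSingletonClass ν] (q : ℝ) :
    ∫ xy, q ^ discordCount xy.1 xy.2
        ∂(Measure.pi fun _ : Fin n => μ).prod (Measure.pi fun _ : Fin n => ν)
      = qFactorial n q / n.factorial := by
  set P := (Measure.pi fun _ : Fin n => μ).prod (Measure.pi fun _ : Fin n => ν)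
  set F := fun xy : (Fin n → ℝ) × (Fin n → ℝ) => q ^ discordCount xy.1 xy.2
  have hF := integrable_pow_discordCount P q
  have hinj : ∀ᵐ xy ∂P, Function.Injective xy.1 ∧ Function.Injective xy.2 :=
    (measurePreserving_fst.quasiMeasurePreserving.ae
      (Measure.ae_injective_pi fun _ : Fin n => μ)).and
    (measurePreserving_snd.quasiMeasurePreserving.ae
      (Measure.ae_injective_pi fun _ : Fin n => ν))
  have hsum : ∀ᵐ xy ∂P, ∑ σ : Equiv.Perm (Fin n), F (xy.1, xy.2 ∘ σ) = qFactorial n q := by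
    filter_upwards [hinj] with xy ⟨hx, hy⟩
    exact (sum_pow_discordCount_comp_perm q hx hy).trans (sum_pow_invCount n q)
  rw [eq_div_iff (by positivity), mul_comm]
  calc (n.factorial : ℝ) * ∫ xy, F xy ∂P
      = ∑ σ : Equiv.Perm (Fin n), ∫ xy, F (xy.1, xy.2 ∘ σ) ∂P := by
        rw [sum_congr rfl fun σ _ => (measurePreserving_comp_perm_snd μ ν σ).integral_comp
          (measurableEmbedding_comp_perm_snd σ) F]
        simp [Fintype.card_perm, P]
    _ = ∫ xy, ∑ σ : Equiv.Perm (Fin n), F (xy.1, xy.2 ∘ σ) ∂P :=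
        (integral_finsetSum _ fun σ _ =>
          ((measurePreserving_comp_perm_snd μ ν σ).integrable_comp_emb
            (measurableEmbedding_comp_perm_snd σ)).2 hF).symm
    _ = qFactorial n q := by simp [integral_congr_ae hsum]

theorem HM_eq (n : ℕ) (x : Fin n → ℝ × ℝ) :
    HM n x = discordCount (fun i => (x i).1) (fun i => (x i).2) / ((n : ℝ) - 1) := by
  simp only [HM, discordCount, pairCount, card_filter, hfun]
  push_cast
  rw [one_div_mul_eq_div]
  congr 1
  refine sum_congr rfl fun i _ => sum_congr rfl fun j _ => ?_
  by_cases hij : i < j <;> simp [hij]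

instance : IsProbabilityMeasure lamI :=
  ⟨by simp [lamI]⟩

instance : NullSingletonClass lamI := by
  rw [lamI]; infer_instance

theorem ZM_eq_integral (n : ℕ) (β : ℝ) :
    ZM n β = ∫ xy, exp (-β / ((n : ℝ) - 1)) ^ discordCount xy.1 xy.2
      ∂(Measure.pi fun _ : Fin n => lamI).prod (Measure.pi fun _ => lamI) := by
  have hexp : ∀ x : Fin n → ℝ × ℝ, exp (-β * HM n x)
      = exp (-β / ((n : ℝ) - 1)) ^ discordCount (fun i => (x i).1) (fun i => (x i).2) := by
    intro x
    rw [HM_eq, ← Real.exp_nat_mul]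
    ring_nf
  simp_rw [ZM, lam2, hexp]
  exact (measurePreserving_arrowProdEquivProdArrow ℝ ℝ (Fin n) (fun _ => lamI)
    fun _ => lamI).integral_comp' fun xy => exp (-β / ((n : ℝ) - 1)) ^ discordCount xy.1 xy.2

theorem statement0_general (n : ℕ) (β : ℝ) :
    pN n β = (1 / (n : ℝ)) *
      Real.log (qFactorial n (Real.exp (-β / ((n : ℝ) - 1))) / (Nat.factorial n : ℝ)) := by
  rw [pN, ZM_eq_integral, integral_pow_discordCount]

/-- For every `n ≥ 2` and real `β`, the finite-volume pressure satisfies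
`p_n(β) = (1/n) ln([n]_q!/n!)` at `q = exp(−β/(n−1))`. -/
theorem statement0 (n : ℕ) (hn : 2 ≤ n) (β : ℝ) :
    pN n β = (1 / (n : ℝ)) *
      Real.log (qFactorial n (Real.exp (-β / ((n : ℝ) - 1))) / (Nat.factorial n : ℝ)) :=
  statement0_general n β

end
end

section
/- For each β ∈ ℝ and each (θ₁,θ₂) ∈ (0,1)², the function t ↦ Φ_β(θ₁,θ₂;t) is strictly convex on the interval I_{θ₁,θ₂} = [max{0, θ₁+θ₂−1}, min{θ₁,θ₂}]. -/
open MeasureTheory Real Set Filter ENNReal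
open scoped Classical

noncomputable section

/-- The limiting pressure `p(β)`, interpreted as `0` at `β = 0`. -/
def pP (β : ℝ) : ℝ :=
  if β = 0 then 0 else ∫ x in (0:ℝ)..1, Real.log ((1 - Real.exp (-β * x)) / (β * x))

/-- The relative entropy `S(ν | λ⊗²) ∈ ℝ ∪ {−∞}` for measures on `[0,1]²`. -/
def Srel2 (ν : Measure (ℝ × ℝ)) : EReal :=
  if ν ≪ lam2 then (((- ∫ p, Real.log ((ν.rnDeriv lam2 p).toReal) ∂ν) : ℝ) : EReal) else ⊥

/-- The relative entropy `S(μ | λ) ∈ ℝ ∪ {−∞}` for measures on `[0,1]`. -/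
def Srel1 (μ : Measure ℝ) : EReal :=
  if μ ≪ lamI then (((- ∫ x, Real.log ((μ.rnDeriv lamI x).toReal) ∂μ) : ℝ) : EReal) else ⊥

/-- The mean-field energy `ℰ(ν)`. -/
def energy (ν : Measure (ℝ × ℝ)) : ℝ := (1 / 2) * ∫ p, ∫ q, hfun p q ∂ν ∂ν

/-- The large deviation rate function `I_β(ν) = −(S(ν|λ⊗²) − β ℰ(ν) − p(β))`. -/
def rate (β : ℝ) (ν : Measure (ℝ × ℝ)) : EReal :=
  -(Srel2 ν - ((β * energy ν : ℝ) : EReal) - ((pP β : ℝ) : EReal))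

/-- The explicit four-square value `Φ̃_β(θ₁,θ₂;t₁₁,t₁₂,t₂₁,t₂₂)`. -/
def Phit (β θ₁ θ₂ t₁₁ t₁₂ t₂₁ t₂₂ : ℝ) : ℝ :=
  pP β + t₁₁ * Real.log (t₁₁ / (θ₁ * θ₂)) + t₁₂ * Real.log (t₁₂ / (θ₁ * (1 - θ₂)))
    + t₂₁ * Real.log (t₂₁ / ((1 - θ₁) * θ₂)) + t₂₂ * Real.log (t₂₂ / ((1 - θ₁) * (1 - θ₂)))
    + t₁₁ * pP (β * t₁₁) + t₁₂ * pP (β * t₁₂) + t₂₁ * pP (β * t₂₁) + t₂₂ * pP (β * t₂₂)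
    - (t₁₁ + t₁₂) * pP (β * (t₁₁ + t₁₂)) - (t₁₁ + t₂₁) * pP (β * (t₁₁ + t₂₁))
    - (t₁₂ + t₂₂) * pP (β * (t₁₂ + t₂₂)) - (t₂₁ + t₂₂) * pP (β * (t₂₁ + t₂₂))
    + β * t₁₂ * t₂₁

/-- The one-parameter reduction `Φ_β(θ₁,θ₂;t)`. -/
def Phi (β θ₁ θ₂ t : ℝ) : ℝ := Phit β θ₁ θ₂ t (θ₁ - t) (θ₂ - t) (1 - θ₁ - θ₂ + t)

/-!
Write `f_γ(s) = s log s + s p(γ s)` (`cellTerm γ`). The function `Φ_β(θ₁,θ₂;·)` is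
`f_β(t₁₁) + f_{-β}(t₁₂) + f_{-β}(t₂₁) + f_β(t₂₂)` plus an affine function of `t`: the marginal
terms are constant, and the interaction `β t₁₂ t₂₁` is absorbed by the identity
`p(-β) = p(β) + β/2`. Each `f_γ` is strictly convex on `[0, ∞)`: with
`g(u) = log ((1 - e^{-u}) / u)` (`pIntegrand`) we have `s p(γ s) = ∫₀ˢ g(γ u) du`, so
`f_γ'(s) = 1 + log s + g(γ s)`, which is `1 + log ((1 - e^{-γ s}) / γ)` for `γ ≠ 0` and
`1 + log s` for `γ = 0`, strictly increasing either way.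
-/

def pIntegrand (u : ℝ) : ℝ := Real.log ((1 - Real.exp (-u)) / u)

def cellTerm (γ s : ℝ) : ℝ := s * Real.log s + s * pP (γ * s)

lemma pIntegrand_zero : pIntegrand 0 = 0 := by simp [pIntegrand]

lemma one_sub_exp_neg_div_pos {u : ℝ} (hu : u ≠ 0) : 0 < (1 - Real.exp (-u)) / u := by
  rcases hu.lt_or_gt with hu | hu
  · exact div_pos_of_neg_of_neg (by simpa using Real.one_lt_exp_iff.2 (neg_pos.2 hu)) hu
  · exact div_pos (by simpa using Real.exp_lt_one_iff.2 (neg_lt_zero.2 hu)) hu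

lemma dslope_one_sub_exp_neg_zero :
    dslope (fun v : ℝ => 1 - Real.exp (-v)) 0 0 = 1 := by
  rw [dslope_same]
  simpa using (((Real.hasDerivAt_exp _).comp 0 (hasDerivAt_neg 0)).const_sub 1).deriv

/-- `dslope` fills the removable singularity at `0` with the value `1`; there both sides vanish,
the left one because `log (0 / 0) = log 0 = 0`. -/
lemma pIntegrand_eq_log_dslope (u : ℝ) :
    pIntegrand u = Real.log (dslope (fun v => 1 - Real.exp (-v)) 0 u) := by
  rcases eq_or_ne u 0 with rfl | hu
  · rw [dslope_one_sub_exp_neg_zero, pIntegrand_zero, Real.log_one]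
  · simp [pIntegrand, dslope_of_ne _ hu, slope_def_field]

lemma continuous_pIntegrand : Continuous pIntegrand := by
  have hφ : Differentiable ℝ fun v : ℝ => 1 - Real.exp (-v) := by fun_prop
  have hcont : Continuous (dslope (fun v : ℝ => 1 - Real.exp (-v)) 0) :=
    continuous_iff_continuousAt.2 fun u => by
      rcases eq_or_ne u 0 with rfl | hu
      · exact continuousAt_dslope_same.2 (hφ 0)
      · exact (continuousAt_dslope_of_ne hu).2 hφ.continuous.continuousAt
  have hne : ∀ u, dslope (fun v : ℝ => 1 - Real.exp (-v)) 0 u ≠ 0 := fun u => by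
    rcases eq_or_ne u 0 with rfl | hu
    · rw [dslope_one_sub_exp_neg_zero]
      exact one_ne_zero
    · simpa [dslope_of_ne _ hu, slope_def_field] using (one_sub_exp_neg_div_pos hu).ne'
  simpa only [funext pIntegrand_eq_log_dslope] using hcont.log hne

lemma pP_eq_integral (c : ℝ) : pP c = ∫ x in (0:ℝ)..1, pIntegrand (c * x) := by
  rcases eq_or_ne c 0 with rfl | hc
  · simp [pP, pIntegrand_zero]
  · simp [pP, hc, pIntegrand, neg_mul]

lemma mul_pP_mul_eq_integral (γ s : ℝ) :
    s * pP (γ * s) = ∫ u in (0:ℝ)..s, pIntegrand (γ * u) := by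
  rcases eq_or_ne s 0 with rfl | hs
  · simp
  · have hsub := intervalIntegral.integral_comp_mul_left (fun u => pIntegrand (γ * u))
      (a := 0) (b := 1) hs
    simp only [mul_zero, mul_one, smul_eq_mul] at hsub
    rw [pP_eq_integral]
    simp_rw [mul_assoc, hsub]
    field_simp

lemma pIntegrand_neg (u : ℝ) : pIntegrand (-u) = pIntegrand u + u := by
  rcases eq_or_ne u 0 with rfl | hu
  · simp
  · have key : (1 - Real.exp (-(-u))) / -u = Real.exp u * ((1 - Real.exp (-u)) / u) := by
      rw [neg_neg, Real.exp_neg]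
      field_simp
      ring
    rw [pIntegrand, key, Real.log_mul (Real.exp_pos u).ne' (one_sub_exp_neg_div_pos hu).ne',
      Real.log_exp, pIntegrand, add_comm]

lemma pP_neg (c : ℝ) : pP (-c) = pP c + c / 2 := by
  have hint : IntervalIntegrable (fun x => pIntegrand (c * x)) MeasureTheory.volume 0 1 :=
    (continuous_pIntegrand.comp (continuous_const_mul c)).intervalIntegrable 0 1
  simp_rw [pP_eq_integral, neg_mul, pIntegrand_neg]
  rw [intervalIntegral.integral_add hint ((continuous_const_mul c).intervalIntegrable 0 1),
    intervalIntegral.integral_const_mul, integral_id]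
  ring

lemma hasDerivAt_mul_pP_mul (γ s : ℝ) :
    HasDerivAt (fun s => s * pP (γ * s)) (pIntegrand (γ * s)) s := by
  simp_rw [mul_pP_mul_eq_integral]
  exact ((continuous_pIntegrand.comp (continuous_const_mul γ)).integral_hasStrictDerivAt
    0 s).hasDerivAt

lemma strictMono_one_sub_exp_neg_mul_div {γ : ℝ} (hγ : γ ≠ 0) :
    StrictMono fun s => (1 - Real.exp (-(γ * s))) / γ := by
  intro s t hst
  rcases hγ.lt_or_gt with hγ | hγ
  · refine div_lt_div_of_neg_of_lt hγ ?_
    have := Real.exp_lt_exp.2 (show -(γ * s) < -(γ * t) by nlinarith)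
    linarith
  · refine div_lt_div_of_pos_right ?_ hγ
    have := Real.exp_lt_exp.2 (show -(γ * t) < -(γ * s) by nlinarith)
    linarith

lemma strictMonoOn_log_add_pIntegrand_mul (γ : ℝ) :
    StrictMonoOn (fun s => Real.log s + pIntegrand (γ * s)) (Ioi 0) := by
  rcases eq_or_ne γ 0 with rfl | hγ
  · simpa [pIntegrand_zero] using Real.strictMonoOn_log
  have hψ := strictMono_one_sub_exp_neg_mul_div hγ
  have key : ∀ s > 0,
      Real.log s + pIntegrand (γ * s) = Real.log ((1 - Real.exp (-(γ * s))) / γ) := fun s hs => by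
    rw [pIntegrand, ← Real.log_mul hs.ne' (one_sub_exp_neg_div_pos (mul_ne_zero hγ hs.ne')).ne']
    congr 1
    field_simp
  intro s hs t ht hst
  simp only [key s hs, key t ht]
  refine Real.log_lt_log ?_ (hψ hst)
  simpa using hψ (show (0:ℝ) < s from hs)

lemma hasDerivAt_cellTerm (γ : ℝ) {s : ℝ} (hs : s ≠ 0) :
    HasDerivAt (cellTerm γ) (Real.log s + 1 + pIntegrand (γ * s)) s :=
  (Real.hasDerivAt_mul_log hs).add (hasDerivAt_mul_pP_mul γ s)

lemma strictConvexOn_cellTerm (γ : ℝ) : StrictConvexOn ℝ (Ici 0) (cellTerm γ) := by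
  have hcont : Continuous fun s => s * pP (γ * s) :=
    continuous_iff_continuousAt.2 fun s => (hasDerivAt_mul_pP_mul γ s).continuousAt
  refine StrictMonoOn.strictConvexOn_of_deriv (convex_Ici 0)
    (Real.continuous_mul_log.add hcont).continuousOn ?_
  rw [interior_Ici]
  intro s hs t ht hst
  rw [(hasDerivAt_cellTerm γ (ne_of_gt hs)).deriv, (hasDerivAt_cellTerm γ (ne_of_gt ht)).deriv]
  linarith [strictMonoOn_log_add_pIntegrand_mul γ hs ht hst]

theorem StrictConvexOn.comp_affineMap {𝕜 E F β : Type*} [Field 𝕜] [LinearOrder 𝕜]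
    [AddCommGroup E] [AddCommGroup F] [AddCommMonoid β] [PartialOrder β] [Module 𝕜 E]
    [Module 𝕜 F] [SMul 𝕜 β] {f : F → β} (g : E →ᵃ[𝕜] F) (hg : Function.Injective g) {s : Set F}
    (hf : StrictConvexOn 𝕜 s f) : StrictConvexOn 𝕜 (g ⁻¹' s) (f ∘ g) :=
  ⟨hf.1.affine_preimage _, fun x hx y hy hxy a b ha hb hab => by
    simpa only [Function.comp_apply, Convex.combo_affine_apply hab] using
      hf.2 hx hy (hg.ne hxy) ha hb hab⟩

lemma StrictConvexOn.comp_const_sub {s : Set ℝ} {f : ℝ → ℝ} (hf : StrictConvexOn ℝ s f)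
    (c : ℝ) : StrictConvexOn ℝ ((c - ·) ⁻¹' s) fun t => f (c - t) :=
  hf.comp_affineMap (AffineMap.const ℝ ℝ c - AffineMap.id ℝ ℝ) fun x y h => by
    simpa using h

lemma mul_log_div_eq (s : ℝ) {c : ℝ} (hc : c ≠ 0) :
    s * Real.log (s / c) = s * Real.log s - s * Real.log c := by
  rcases eq_or_ne s 0 with rfl | hs
  · simp
  · rw [Real.log_div hs hc, mul_sub]

/-- The interaction `β t₁₂ t₂₁` is absorbed into the off-diagonal cells through `pP_neg`,
because `t₁₂ - t₂₁ = θ₁ - θ₂` does not depend on `t`. -/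
lemma Phi_eq_cellTerm_add_affine (β : ℝ) {θ₁ θ₂ : ℝ} (h₁ : θ₁ ≠ 0) (h₁' : 1 - θ₁ ≠ 0)
    (h₂ : θ₂ ≠ 0) (h₂' : 1 - θ₂ ≠ 0) :
    ∃ a b : ℝ, ∀ t, Phi β θ₁ θ₂ t = cellTerm β t + cellTerm (-β) (θ₁ - t)
      + cellTerm (-β) (θ₂ - t) + cellTerm β (1 - θ₁ - θ₂ + t) + (a * t + b) := by
  refine ⟨-Real.log (θ₁ * θ₂) + Real.log (θ₁ * (1 - θ₂)) + Real.log ((1 - θ₁) * θ₂)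
      - Real.log ((1 - θ₁) * (1 - θ₂)),
    pP β - θ₁ * Real.log (θ₁ * (1 - θ₂)) - θ₂ * Real.log ((1 - θ₁) * θ₂)
      - (1 - θ₁ - θ₂) * Real.log ((1 - θ₁) * (1 - θ₂))
      - θ₁ * pP (β * θ₁) - θ₂ * pP (β * θ₂) - (1 - θ₂) * pP (β * (1 - θ₂))
      - (1 - θ₁) * pP (β * (1 - θ₁)) - β * (θ₁ - θ₂) ^ 2 / 2, fun t => ?_⟩
  have e₁ : t + (θ₁ - t) = θ₁ := by ring
  have e₂ : t + (θ₂ - t) = θ₂ := by ring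
  have e₃ : θ₁ - t + (1 - θ₁ - θ₂ + t) = 1 - θ₂ := by ring
  have e₄ : θ₂ - t + (1 - θ₁ - θ₂ + t) = 1 - θ₁ := by ring
  rw [Phi, Phit, e₁, e₂, e₃, e₄, mul_log_div_eq _ (mul_ne_zero h₁ h₂),
    mul_log_div_eq _ (mul_ne_zero h₁ h₂'), mul_log_div_eq _ (mul_ne_zero h₁' h₂),
    mul_log_div_eq _ (mul_ne_zero h₁' h₂')]
  simp only [cellTerm, neg_mul, pP_neg]
  ring

/-- For each `β ∈ ℝ` and `(θ₁,θ₂) ∈ (0,1)²`, the function `t ↦ Φ_β(θ₁,θ₂;t)` is strictly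
convex on `I_{θ₁,θ₂} = [max{0,θ₁+θ₂−1}, min{θ₁,θ₂}]`. -/
theorem statement5 (β θ₁ θ₂ : ℝ)
    (hθ₁ : θ₁ ∈ Set.Ioo (0:ℝ) 1) (hθ₂ : θ₂ ∈ Set.Ioo (0:ℝ) 1) :
    StrictConvexOn ℝ (Set.Icc (max 0 (θ₁ + θ₂ - 1)) (min θ₁ θ₂))
      (fun t => Phi β θ₁ θ₂ t) := by
  obtain ⟨h₁, h₁'⟩ := hθ₁
  obtain ⟨h₂, h₂'⟩ := hθ₂
  obtain ⟨a, b, hΦ⟩ := Phi_eq_cellTerm_add_affine β h₁.ne' (sub_ne_zero.2 h₁'.ne')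
    h₂.ne' (sub_ne_zero.2 h₂'.ne')
  set I := Icc (max 0 (θ₁ + θ₂ - 1)) (min θ₁ θ₂)
  have hI : Convex ℝ I := convex_Icc _ _
  have hcells : ∀ t ∈ I, 0 ≤ t ∧ 0 ≤ θ₁ - t ∧ 0 ≤ θ₂ - t ∧ 0 ≤ 1 - θ₁ - θ₂ + t :=
    fun t ⟨hlo, hhi⟩ => by
      simp only [max_le_iff, le_min_iff] at hlo hhi
      refine ⟨?_, ?_, ?_, ?_⟩ <;> linarith
  have h₁₁ := (strictConvexOn_cellTerm β).subset (fun t ht => (hcells t ht).1) hI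
  have h₁₂ := ((strictConvexOn_cellTerm (-β)).comp_const_sub θ₁).subset
    (fun t ht => (hcells t ht).2.1) hI
  have h₂₁ := ((strictConvexOn_cellTerm (-β)).comp_const_sub θ₂).subset
    (fun t ht => (hcells t ht).2.2.1) hI
  have h₂₂ := ((strictConvexOn_cellTerm β).translate_right (1 - θ₁ - θ₂)).subset
    (fun t ht => (hcells t ht).2.2.2) hI
  have haff : ConvexOn ℝ I fun t => a * t + b :=
    ((a • LinearMap.id : ℝ →ₗ[ℝ] ℝ).convexOn hI).add_const b
  exact ((((h₁₁.add h₁₂).add h₂₁).add h₂₂).add_convexOn haff).congr fun t _ => (hΦ t).symm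

end
end

section
/- Suppose ν⁽⁰⁾ is a Borel probability measure on [0,1]² absolutely continuous with respect to Lebesgue measure λ⊗² with both marginals equal to Lebesgue measure λ, and G_X, G_Y : [0,1] → [0,1] are absolutely continuous probability distribution functions (nondecreasing, absolutely continuous, G(0)=0, G(1)=1). Let ν be the measure determined by ν([0,x]×[0,y]) = ν⁽⁰⁾([0,G_X(x)]×[0,G_Y(y)]) for all x,y ∈ [0,1]. Then ℰ(ν) = ℰ(ν⁽⁰⁾). -/
open MeasureTheory Real Set Filter ENNReal
open scoped Classical

noncomputable section

/-! Extend `G_X`, `G_Y` to continuous monotone maps `F`, `G` of `ℝ`. Comparing distribution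
functions on quadrants shows that `ν⁽⁰⁾` is the image of `ν` under `T = F × G`. A monotone map
preserves strict inequalities except inside its flat pieces, and these take only countably many
values; such values are null for the Lebesgue marginals of `ν⁽⁰⁾ = T₊ν`. Hence for `ν`-a.e. `p`,
`h(Tp, Tq) = h(p, q)` for every `q`, and `ℰ(T₊ν) = ℰ(ν)`. -/

theorem Monotone.countable_setOf_nontrivial_preimage {β : Type*} [PartialOrder β] {f : ℝ → β}
    (hf : Monotone f) : {v | (f ⁻¹' {v}).Nontrivial}.Countable := by
  refine (countable_range fun q : ℚ => f q).mono ?_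
  rintro v ⟨x, hx, y, hy, hxy⟩
  wlog hlt : x < y generalizing x y
  · exact this y hy x hx hxy.symm (hxy.lt_or_gt.resolve_left hlt)
  obtain ⟨r, hxr, hry⟩ := exists_rat_btwn hlt
  exact ⟨r, le_antisymm (hy ▸ hf hry.le) (hx ▸ hf hxr.le)⟩

section LinearOrder

variable {α β : Type*} [LinearOrder α] [PartialOrder β] {f : α → β} {x : α}

theorem Monotone.lt_iff_lt_of_subsingleton_preimage (hf : Monotone f)
    (hx : (f ⁻¹' {f x}).Subsingleton) (y : α) : f x < f y ↔ x < y :=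
  ⟨hf.reflect_lt, fun h => (hf h.le).lt_of_ne fun he => h.ne (hx rfl he.symm)⟩

theorem Monotone.lt_iff_lt_of_subsingleton_preimage' (hf : Monotone f)
    (hx : (f ⁻¹' {f x}).Subsingleton) (y : α) : f y < f x ↔ y < x :=
  ⟨hf.reflect_lt, fun h => (hf h.le).lt_of_ne fun he => h.ne (hx he rfl)⟩

end LinearOrder

theorem hfun_prodMap {f g : ℝ → ℝ} (hf : Monotone f) (hg : Monotone g) {p : ℝ × ℝ}
    (hp₁ : (f ⁻¹' {f p.1}).Subsingleton) (hp₂ : (g ⁻¹' {g p.2}).Subsingleton) (q : ℝ × ℝ) :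
    hfun (Prod.map f g p) (Prod.map f g q) = hfun p q := by
  simp only [hfun, Prod.map_fst, Prod.map_snd, mul_neg_iff, sub_pos, sub_neg,
    hf.lt_iff_lt_of_subsingleton_preimage hp₁, hf.lt_iff_lt_of_subsingleton_preimage' hp₁,
    hg.lt_iff_lt_of_subsingleton_preimage hp₂, hg.lt_iff_lt_of_subsingleton_preimage' hp₂]

theorem measurable_hfun : Measurable (Function.uncurry hfun) := by
  refine Measurable.ite ?_ measurable_const measurable_const
  exact measurableSet_lt (by fun_prop) measurable_const

theorem Monotone.ae_subsingleton_preimage {μ : Measure (ℝ × ℝ)} {f : ℝ → ℝ} (hf : Monotone f)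
    (i : ℝ × ℝ → ℝ) (hi : Measurable i) (hμ : NullSingletonClass (μ.map fun p => f (i p))) :
    ∀ᵐ p ∂μ, (f ⁻¹' {f (i p)}).Subsingleton := by
  have hnull := hf.countable_setOf_nontrivial_preimage.measure_zero (μ.map fun p => f (i p))
  filter_upwards [ae_of_ae_map (hf.measurable.comp hi).aemeasurable
    (measure_eq_zero_iff_ae_notMem.mp hnull)] with p hp
  exact Set.not_nontrivial_iff.mp hp

theorem energy_map_prodMap {μ : Measure (ℝ × ℝ)} [SFinite μ] {f g : ℝ → ℝ} (hf : Monotone f)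
    (hg : Monotone g) (hf₀ : NullSingletonClass (μ.map fun p => f p.1))
    (hg₀ : NullSingletonClass (μ.map fun p => g p.2)) :
    energy (μ.map (Prod.map f g)) = energy μ := by
  have hT : Measurable (Prod.map f g) := hf.measurable.prodMap hg.measurable
  have hinner : Measurable fun p => ∫ q, hfun p q ∂(μ.map (Prod.map f g)) :=
    (measurable_hfun.stronglyMeasurable.integral_prod_right).measurable
  rw [energy, energy, integral_map hT.aemeasurable hinner.aestronglyMeasurable]
  congr 1
  refine integral_congr_ae ?_
  filter_upwards [hf.ae_subsingleton_preimage Prod.fst measurable_fst hf₀,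
    hg.ae_subsingleton_preimage Prod.snd measurable_snd hg₀] with p hp₁ hp₂
  have hq : Measurable (hfun (Prod.map f g p)) := measurable_hfun.comp measurable_prodMk_left
  rw [integral_map hT.aemeasurable hq.aestronglyMeasurable]
  simp only [hfun_prodMap hf hg hp₁ hp₂]

theorem MonotoneOn.exists_inter_preimage_Iic_eq_Icc {α β : Type*}
    [ConditionallyCompleteLinearOrder α] [TopologicalSpace α] [OrderTopology α] [DenselyOrdered α]
    [LinearOrder β] [TopologicalSpace β] [OrderClosedTopology β] {G : α → β} {l u : α} {a : β}
    (hm : MonotoneOn G (Icc l u)) (hc : ContinuousOn G (Icc l u)) (hlu : l ≤ u)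
    (ha : a ∈ Icc (G l) (G u)) :
    ∃ c ∈ Icc l u, G c = a ∧ Icc l u ∩ G ⁻¹' Iic a = Icc l c := by
  set S := Icc l u ∩ G ⁻¹' Iic a
  have hbdd : BddAbove S := ⟨u, fun x hx => hx.1.2⟩
  have hcS : sSup S ∈ S := (hc.preimage_isClosed_of_isClosed isClosed_Icc isClosed_Iic).csSup_mem
    ⟨l, left_mem_Icc.2 hlu, ha.1⟩ hbdd
  -- the largest point of `S` is also hit by the intermediate value theorem on `[sSup S, u]`
  have hGc : G (sSup S) = a := by
    obtain ⟨x, hx, hGx⟩ := intermediate_value_Icc hcS.1.2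
      (hc.mono (Icc_subset_Icc hcS.1.1 le_rfl)) ⟨hcS.2, ha.2⟩
    have hxS : x ∈ S := ⟨⟨hcS.1.1.trans hx.1, hx.2⟩, hGx.le⟩
    rwa [le_antisymm (le_csSup hbdd hxS) hx.1] at hGx
  refine ⟨sSup S, hcS.1, hGc, Subset.antisymm (fun x hx => ⟨hx.1.1, le_csSup hbdd hx⟩)
    fun x hx => ?_⟩
  have hxI : x ∈ Icc l u := ⟨hx.1, hx.2.trans hcS.1.2⟩
  exact ⟨hxI, (hm hxI hcS.1 hx.2).trans hGc.le⟩

theorem exists_Icc_inter_preimage_Iic {F : ℝ → ℝ} (hm : Monotone F)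
    (hc : ContinuousOn F (Icc 0 1)) (h0 : F 0 = 0) (h1 : F 1 = 1) (a : ℝ) :
    (Icc 0 1 ∩ Iic a = ∅ ∧ Icc 0 1 ∩ F ⁻¹' Iic a = ∅) ∨
      ∃ c ∈ Icc (0:ℝ) 1, Icc 0 1 ∩ Iic a = Icc 0 (F c) ∧ Icc 0 1 ∩ F ⁻¹' Iic a = Icc 0 c := by
  rcases lt_or_ge a 0 with ha | ha
  · left
    constructor <;> refine eq_empty_of_forall_notMem fun x hx => ha.not_ge ?_
    · exact hx.1.1.trans hx.2
    · exact h0 ▸ (hm hx.1.1).trans hx.2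
  right
  obtain ⟨c, hc, hFc, hS⟩ := (hm.monotoneOn _).exists_inter_preimage_Iic_eq_Icc hc zero_le_one
    (a := min a 1) (by rw [h0, h1]; exact ⟨le_min ha zero_le_one, min_le_right _ _⟩)
  refine ⟨c, hc, ?_, ?_⟩
  · ext x
    simp only [hFc, mem_inter_iff, mem_Icc, mem_Iic, le_min_iff]
    tauto
  · rw [← hS]
    ext x
    simp only [mem_inter_iff, mem_Icc, mem_preimage, mem_Iic, le_min_iff, and_congr_right_iff]
    exact fun hx => (and_iff_left (h1 ▸ hm hx.2)).symm

theorem Measure.ext_of_Iic_prod_Iic {μ ν : Measure (ℝ × ℝ)} [IsFiniteMeasure μ]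
    (h : ∀ a b, μ (Iic a ×ˢ Iic b) = ν (Iic a ×ˢ Iic b)) : μ = ν := by
  have hspan : IsCountablySpanning (range (Iic : ℝ → Set ℝ)) :=
    ⟨fun n : ℕ => Iic (n : ℝ), fun n => mem_range_self _,
      iUnion_eq_univ_iff.2 fun x => ⟨⌈x⌉₊, Nat.le_ceil x⟩⟩
  have hgen : (inferInstance : MeasurableSpace (ℝ × ℝ)) =
      .generateFrom (image2 (· ×ˢ ·) (range Iic) (range Iic)) := by
    rw [← generateFrom_prod_eq hspan hspan, ← borel_eq_generateFrom_Iic, ← BorelSpace.measurable_eq]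
  have huniv : ⋃ n : ℕ, Iic (n : ℝ) ×ˢ Iic (n : ℝ) = univ :=
    iUnion_eq_univ_iff.2 fun p => ⟨⌈max p.1 p.2⌉₊, ⟨(le_max_left p.1 p.2).trans (Nat.le_ceil _),
      (le_max_right p.1 p.2).trans (Nat.le_ceil _)⟩⟩
  have hmono : Monotone fun n : ℕ => Iic (n : ℝ) ×ˢ Iic (n : ℝ) := fun m n hmn =>
    prod_mono (Iic_subset_Iic.2 (Nat.cast_le.2 hmn)) (Iic_subset_Iic.2 (Nat.cast_le.2 hmn))
  refine ext_of_generate_finite _ hgen (isPiSystem_Iic.prod isPiSystem_Iic) ?_ ?_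
  · rintro _ ⟨_, ⟨a, rfl⟩, _, ⟨b, rfl⟩, rfl⟩
    exact h a b
  · rw [← huniv, hmono.measure_iUnion, hmono.measure_iUnion]
    simp only [h]

theorem measure_compl_prod_eq_zero {α β : Type*} [MeasurableSpace α] [MeasurableSpace β]
    {ν : Measure (α × β)} {s : Set α} {t : Set β} (hs : MeasurableSet s) (ht : MeasurableSet t)
    (h₁ : ν.map Prod.fst sᶜ = 0) (h₂ : ν.map Prod.snd tᶜ = 0) : ν (s ×ˢ t)ᶜ = 0 := by
  rw [Measure.map_apply measurable_fst hs.compl] at h₁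
  rw [Measure.map_apply measurable_snd ht.compl] at h₂
  rw [compl_prod_eq_union, prod_univ, univ_prod]
  exact measure_union_null h₁ h₂

theorem map_prodMap_eq_of_cdf {μ μ₀ : Measure (ℝ × ℝ)} [IsFiniteMeasure μ] {F G : ℝ → ℝ}
    (hFm : Monotone F) (hFc : ContinuousOn F (Icc 0 1)) (hF0 : F 0 = 0) (hF1 : F 1 = 1)
    (hGm : Monotone G) (hGc : ContinuousOn G (Icc 0 1)) (hG0 : G 0 = 0) (hG1 : G 1 = 1)
    (hμ : μ (Icc 0 1 ×ˢ Icc 0 1)ᶜ = 0) (hμ₀ : μ₀ (Icc 0 1 ×ˢ Icc 0 1)ᶜ = 0)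
    (h : ∀ x ∈ Icc (0:ℝ) 1, ∀ y ∈ Icc (0:ℝ) 1,
      μ (Icc 0 x ×ˢ Icc 0 y) = μ₀ (Icc 0 (F x) ×ˢ Icc 0 (G y))) :
    μ.map (Prod.map F G) = μ₀ := by
  have hT : Measurable (Prod.map F G) := hFm.measurable.prodMap hGm.measurable
  have hrestr : ∀ (ρ : Measure (ℝ × ℝ)), ρ (Icc 0 1 ×ˢ Icc 0 1)ᶜ = 0 → ∀ s t,
      ρ (s ×ˢ t) = ρ ((Icc 0 1 ∩ s) ×ˢ (Icc 0 1 ∩ t)) := fun ρ hρ s t => by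
    rw [← prod_inter_prod, inter_comm, measure_inter_conull hρ]
  refine Measure.ext_of_Iic_prod_Iic fun a b => ?_
  rw [Measure.map_apply hT (measurableSet_Iic.prod measurableSet_Iic), preimage_prod_map_prod,
    hrestr μ hμ, hrestr μ₀ hμ₀]
  rcases exists_Icc_inter_preimage_Iic hFm hFc hF0 hF1 a with ⟨ha, ha'⟩ | ⟨c, hc, ha, ha'⟩
  · simp [ha, ha']
  rcases exists_Icc_inter_preimage_Iic hGm hGc hG0 hG1 b with ⟨hb, hb'⟩ | ⟨d, hd, hb, hb'⟩
  · simp [hb, hb']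
  rw [ha, ha', hb, hb', h c hc d hd]

theorem MonotoneOn.exists_monotone_continuous_eqOn {α β : Type*} [LinearOrder α]
    [TopologicalSpace α] [OrderTopology α] [Preorder β] [TopologicalSpace β] {G : α → β} {a b : α}
    (hm : MonotoneOn G (Icc a b)) (hc : ContinuousOn G (Icc a b)) (hab : a ≤ b) :
    ∃ F : α → β, Monotone F ∧ Continuous F ∧ EqOn F G (Icc a b) :=
  ⟨IccExtend hab ((Icc a b).domRestrict G), (monotoneOn_iff_monotone.1 hm).IccExtend hab,
    hc.domRestrict.Icc_extend', fun _ hx => IccExtend_of_mem hab _ hx⟩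

section Primitive

variable {G g : ℝ → ℝ} {a b : ℝ}

theorem monotoneOn_of_eq_integral (hg₀ : ∀ t ∈ Icc a b, 0 ≤ g t) (hg : IntegrableOn g (Icc a b))
    (hG : ∀ x ∈ Icc a b, G x = ∫ t in a..x, g t) : MonotoneOn G (Icc a b) := by
  intro x hx y hy hxy
  rw [hG x hx, hG y hy]
  refine intervalIntegral.integral_mono_interval le_rfl hx.1 hxy ?_ ?_
  · filter_upwards [ae_restrict_mem measurableSet_Ioc] with t ht
    exact hg₀ t ⟨ht.1.le, ht.2.trans hy.2⟩
  · refine IntegrableOn.intervalIntegrable (hg.mono_set ?_)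
    rw [uIcc_of_le (hx.1.trans hxy)]
    exact Icc_subset_Icc_right hy.2

theorem continuousOn_of_eq_integral (hab : a ≤ b) (hg : IntegrableOn g (Icc a b))
    (hG : ∀ x ∈ Icc a b, G x = ∫ t in a..x, g t) : ContinuousOn G (Icc a b) := by
  rw [← uIcc_of_le hab] at hg ⊢
  refine (intervalIntegral.continuousOn_primitive_interval hg).congr fun x hx => hG x ?_
  rwa [← uIcc_of_le hab]

theorem exists_monotone_continuous_eqOn_of_eq_integral (hab : a ≤ b)
    (hg₀ : ∀ t ∈ Icc a b, 0 ≤ g t) (hg : IntegrableOn g (Icc a b))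
    (hG : ∀ x ∈ Icc a b, G x = ∫ t in a..x, g t) :
    ∃ F : ℝ → ℝ, Monotone F ∧ Continuous F ∧ EqOn F G (Icc a b) :=
  (monotoneOn_of_eq_integral hg₀ hg hG).exists_monotone_continuous_eqOn
    (continuousOn_of_eq_integral hab hg hG) hab

end Primitive

theorem statement9_general (ν₀ ν : Measure (ℝ × ℝ)) (GX GY gX gY : ℝ → ℝ)
    [IsProbabilityMeasure ν]
    (hmargX : ν₀.map Prod.fst = lamI) (hmargY : ν₀.map Prod.snd = lamI)
    -- `G_X` is an absolutely continuous distribution function with density `g_X`: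
    (hgX0 : ∀ t, 0 ≤ gX t) (hgXint : IntegrableOn gX (Set.Icc (0:ℝ) 1))
    (hGX : ∀ x ∈ Set.Icc (0:ℝ) 1, GX x = ∫ t in (0:ℝ)..x, gX t)
    (hGX0 : GX 0 = 0) (hGX1 : GX 1 = 1)
    -- `G_Y` is an absolutely continuous distribution function with density `g_Y`:
    (hgY0 : ∀ t, 0 ≤ gY t) (hgYint : IntegrableOn gY (Set.Icc (0:ℝ) 1))
    (hGY : ∀ y ∈ Set.Icc (0:ℝ) 1, GY y = ∫ t in (0:ℝ)..y, gY t)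
    (hGY0 : GY 0 = 0) (hGY1 : GY 1 = 1)
    -- `ν` is the measure on `[0,1]²` determined by the rescaling:
    (hsupp : ν ((Set.Icc (0:ℝ) 1 ×ˢ Set.Icc (0:ℝ) 1)ᶜ) = 0)
    (hν : ∀ x ∈ Set.Icc (0:ℝ) 1, ∀ y ∈ Set.Icc (0:ℝ) 1,
      ν (Set.Icc 0 x ×ˢ Set.Icc 0 y) = ν₀ (Set.Icc 0 (GX x) ×ˢ Set.Icc 0 (GY y))) :
    energy ν = energy ν₀ := by
  have h0 : (0:ℝ) ∈ Icc (0:ℝ) 1 := left_mem_Icc.2 zero_le_one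
  have h1 : (1:ℝ) ∈ Icc (0:ℝ) 1 := right_mem_Icc.2 zero_le_one
  obtain ⟨F, hFm, hFc, hFeq⟩ :=
    exists_monotone_continuous_eqOn_of_eq_integral zero_le_one (fun t _ => hgX0 t) hgXint hGX
  obtain ⟨G, hGm, hGc, hGeq⟩ :=
    exists_monotone_continuous_eqOn_of_eq_integral zero_le_one (fun t _ => hgY0 t) hgYint hGY
  have hlamI : lamI (Icc 0 1)ᶜ = 0 := by
    rw [lamI, Measure.restrict_apply' measurableSet_Icc, compl_inter_self, measure_empty]
  have hsupp₀ : ν₀ (Icc 0 1 ×ˢ Icc 0 1)ᶜ = 0 := measure_compl_prod_eq_zero measurableSet_Icc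
    measurableSet_Icc (hmargX ▸ hlamI) (hmargY ▸ hlamI)
  have hmap : ν.map (Prod.map F G) = ν₀ := by
    refine map_prodMap_eq_of_cdf hFm hFc.continuousOn ((hFeq h0).trans hGX0)
      ((hFeq h1).trans hGX1) hGm hGc.continuousOn ((hGeq h0).trans hGY0) ((hGeq h1).trans hGY1)
      hsupp hsupp₀ fun x hx y hy => ?_
    rw [hFeq hx, hGeq hy, hν x hx y hy]
  have hT : Measurable (Prod.map F G) := hFm.measurable.prodMap hGm.measurable
  refine (energy_map_prodMap hFm hGm ?_ ?_).symm.trans (congrArg energy hmap)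
  · rw [show (fun p : ℝ × ℝ => F p.1) = Prod.fst ∘ Prod.map F G from rfl,
      ← Measure.map_map measurable_fst hT, hmap, hmargX, lamI]
    infer_instance
  · rw [show (fun p : ℝ × ℝ => G p.2) = Prod.snd ∘ Prod.map F G from rfl,
      ← Measure.map_map measurable_snd hT, hmap, hmargY, lamI]
    infer_instance

/-- Energy invariance under the rescaling `ν([0,x]×[0,y]) = ν⁽⁰⁾([0,G_X(x)]×[0,G_Y(y)])`:
`ℰ(ν) = ℰ(ν⁽⁰⁾)`. -/
theorem statement9 (ν₀ ν : Measure (ℝ × ℝ)) (GX GY gX gY : ℝ → ℝ)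
    [IsProbabilityMeasure ν₀] [IsProbabilityMeasure ν]
    (hac : ν₀ ≪ lam2)
    (hmargX : ν₀.map Prod.fst = lamI) (hmargY : ν₀.map Prod.snd = lamI)
    -- `G_X` is an absolutely continuous distribution function with density `g_X`:
    (hgX0 : ∀ t, 0 ≤ gX t) (hgXint : IntegrableOn gX (Set.Icc (0:ℝ) 1))
    (hGX : ∀ x ∈ Set.Icc (0:ℝ) 1, GX x = ∫ t in (0:ℝ)..x, gX t)
    (hGX0 : GX 0 = 0) (hGX1 : GX 1 = 1)
    (hGXmem : ∀ x ∈ Set.Icc (0:ℝ) 1, GX x ∈ Set.Icc (0:ℝ) 1)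
    -- `G_Y` is an absolutely continuous distribution function with density `g_Y`:
    (hgY0 : ∀ t, 0 ≤ gY t) (hgYint : IntegrableOn gY (Set.Icc (0:ℝ) 1))
    (hGY : ∀ y ∈ Set.Icc (0:ℝ) 1, GY y = ∫ t in (0:ℝ)..y, gY t)
    (hGY0 : GY 0 = 0) (hGY1 : GY 1 = 1)
    (hGYmem : ∀ y ∈ Set.Icc (0:ℝ) 1, GY y ∈ Set.Icc (0:ℝ) 1)
    -- `ν` is the measure on `[0,1]²` determined by the rescaling:
    (hsupp : ν ((Set.Icc (0:ℝ) 1 ×ˢ Set.Icc (0:ℝ) 1)ᶜ) = 0)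
    (hν : ∀ x ∈ Set.Icc (0:ℝ) 1, ∀ y ∈ Set.Icc (0:ℝ) 1,
      ν (Set.Icc 0 x ×ˢ Set.Icc 0 y) = ν₀ (Set.Icc 0 (GX x) ×ˢ Set.Icc 0 (GY y))) :
    energy ν = energy ν₀ :=
  statement9_general ν₀ ν GX GY gX gY hmargX hmargY hgX0 hgXint hGX hGX0 hGX1 hgY0 hgYint hGY hGY0
    hGY1 hsupp hν

end
end

section
/- Let β ≠ 0 and (θ₁,θ₂) ∈ (0,1)². For every t in the open interval (max{0,θ₁+θ₂−1}, min{θ₁,θ₂}), the second derivative of t ↦ Φ_β(θ₁,θ₂;t) equals Σ_{i,j=1}^{2} β/(2 tanh(β t_{ij}/2)), where t₁₁ = t, t₁₂ = θ₁ − t, t₂₁ = θ₂ − t, t₂₂ = 1 − θ₁ − θ₂ + t. -/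
open MeasureTheory Real Set Filter ENNReal
open scoped Classical

noncomputable section

open scoped Topology

/-!
Writing `f` for the integrand of `p`, the substitution `x ↦ u x` gives `u p(β u) = ∫₀ᵘ f`, so a
cell of mass `u` and reference mass `c` contributes `u log (u / c) + ∫₀ᵘ f` to `Φ`; its derivative
is `log ((1 - e^{-βu}) / (βc)) + 1` and its second derivative `β / (e^{βu} - 1)`. The marginal
terms `(t₁₁ + t₁₂) p(β (t₁₁ + t₁₂))`, … do not depend on `t`, the interaction `β t₁₂ t₂₁`
contributes `2β`, and `β / (e^{βu} - 1) + β / 2 = β / (2 tanh (βu / 2))`.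
-/

namespace FourSquare

variable {β : ℝ}

lemma deriv_deriv_eq_of_eventually_hasDerivAt {𝕜 F : Type*} [NontriviallyNormedField 𝕜]
    [NormedAddCommGroup F] [NormedSpace 𝕜 F] {f f' : 𝕜 → F} {f'' : F} {x : 𝕜}
    (hf : ∀ᶠ y in 𝓝 x, HasDerivAt f (f' y) y) (hf' : HasDerivAt f' f'' x) :
    deriv (deriv f) x = f'' := by
  have h : deriv f =ᶠ[𝓝 x] f' := hf.mono fun _ hy => hy.deriv
  rw [h.deriv_eq, hf'.deriv]

def pressureIntegrand (β y : ℝ) : ℝ := Real.log ((1 - exp (-β * y)) / (β * y))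

lemma hasDerivAt_one_sub_exp (β y : ℝ) :
    HasDerivAt (fun y => 1 - exp (-β * y)) (β * exp (-β * y)) y :=
  (((hasDerivAt_id y).const_mul (-β)).exp.const_sub 1).congr_deriv (by simp [mul_comm])

lemma one_sub_exp_ne_zero {x : ℝ} (hx : x ≠ 0) : 1 - exp x ≠ 0 :=
  sub_ne_zero.2 fun h => hx (exp_eq_one_iff x |>.1 h.symm)

lemma pressureIntegrand_eq_log_dslope (hβ : β ≠ 0) :
    pressureIntegrand β = fun y => Real.log (dslope (fun y => 1 - exp (-β * y)) 0 y / β) := by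
  funext y
  rcases eq_or_ne y 0 with rfl | hy
  -- at `y = 0` the junk value `log ((1 - 1) / 0) = log 0 = 0` agrees with `log 1`
  · rw [pressureIntegrand, dslope_same, (hasDerivAt_one_sub_exp β 0).deriv]
    simp [hβ]
  · rw [dslope_of_ne _ hy, slope_def_field, pressureIntegrand]
    field_simp
    simp

lemma dslope_one_sub_exp_ne_zero (hβ : β ≠ 0) (y : ℝ) :
    dslope (fun y => 1 - exp (-β * y)) 0 y ≠ 0 := by
  rcases eq_or_ne y 0 with rfl | hy
  · rw [dslope_same, (hasDerivAt_one_sub_exp β 0).deriv]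
    simpa using hβ
  · intro h
    have := sub_smul_dslope (fun y => 1 - exp (-β * y)) 0 y
    simp only [h, smul_zero, exp_zero, mul_zero, sub_self, sub_zero] at this
    exact one_sub_exp_ne_zero (mul_ne_zero (neg_ne_zero.2 hβ) hy) this.symm

lemma continuous_pressureIntegrand (hβ : β ≠ 0) : Continuous (pressureIntegrand β) := by
  rw [pressureIntegrand_eq_log_dslope hβ]
  have hd : Continuous (dslope (fun y => 1 - exp (-β * y)) 0) :=
    continuousOn_univ.1 <| (continuousOn_dslope univ_mem).2
      ⟨by fun_prop, (hasDerivAt_one_sub_exp β 0).differentiableAt⟩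
  exact (hd.div_const β).log fun y => div_ne_zero (dslope_one_sub_exp_ne_zero hβ y) hβ

lemma mul_pP_mul_eq_integral (hβ : β ≠ 0) (u : ℝ) :
    u * pP (β * u) = ∫ y in (0 : ℝ)..u, pressureIntegrand β y := by
  rcases eq_or_ne u 0 with rfl | hu
  · simp
  have hf (x : ℝ) :
      Real.log ((1 - exp (-(β * u) * x)) / (β * u * x)) = pressureIntegrand β (u * x) := by
    rw [pressureIntegrand]; ring_nf
  rw [pP, if_neg (mul_ne_zero hβ hu), ← smul_eq_mul]
  simp_rw [hf]
  rw [intervalIntegral.smul_integral_comp_mul_left]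
  simp

lemma hasDerivAt_mul_pP_mul (hβ : β ≠ 0) (u : ℝ) :
    HasDerivAt (fun u => u * pP (β * u)) (pressureIntegrand β u) u := by
  simp only [mul_pP_mul_eq_integral hβ]
  exact ((continuous_pressureIntegrand hβ).integral_hasStrictDerivAt 0 u).hasDerivAt

def cellEnergy (β c u : ℝ) : ℝ := u * Real.log (u / c) + u * pP (β * u)

def cellEnergyDeriv (β c u : ℝ) : ℝ := Real.log (1 - exp (-β * u)) - Real.log (β * c) + 1

lemma hasDerivAt_mul_log_div {c u : ℝ} (hc : c ≠ 0) (hu : u ≠ 0) :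
    HasDerivAt (fun u => u * Real.log (u / c)) (Real.log u + 1 - Real.log c) u := by
  have h : (fun u => u * Real.log (u / c)) = fun u => u * Real.log u - u * Real.log c := by
    funext u
    rcases eq_or_ne u 0 with rfl | hu
    · simp
    · rw [Real.log_div hu hc]; ring
  rw [h]
  exact ((Real.hasDerivAt_mul_log hu).sub ((hasDerivAt_id u).mul_const _)).congr_deriv (by simp)

lemma hasDerivAt_cellEnergy {c u : ℝ} (hβ : β ≠ 0) (hc : c ≠ 0) (hu : u ≠ 0) :
    HasDerivAt (cellEnergy β c) (cellEnergyDeriv β c u) u := by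
  refine ((hasDerivAt_mul_log_div hc hu).add (hasDerivAt_mul_pP_mul hβ u)).congr_deriv ?_
  rw [cellEnergyDeriv, pressureIntegrand,
    Real.log_div (one_sub_exp_ne_zero (mul_ne_zero (neg_ne_zero.2 hβ) hu)) (mul_ne_zero hβ hu),
    Real.log_mul hβ hu, Real.log_mul hβ hc]
  ring

lemma hasDerivAt_cellEnergyDeriv {u : ℝ} (hβ : β ≠ 0) (hu : u ≠ 0) (c : ℝ) :
    HasDerivAt (cellEnergyDeriv β c) (β / (exp (β * u) - 1)) u := by
  have hne : exp (β * u) - 1 ≠ 0 :=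
    sub_ne_zero.2 fun h => mul_ne_zero hβ hu ((exp_eq_one_iff _).1 h)
  have hlog := (hasDerivAt_one_sub_exp β u).log
    (one_sub_exp_ne_zero (mul_ne_zero (neg_ne_zero.2 hβ) hu))
  refine ((hlog.sub_const _).add_const 1).congr_deriv ?_
  rw [neg_mul, exp_neg]
  field_simp

lemma div_exp_sub_one_add_half (b : ℝ) {x : ℝ} (hx : x ≠ 0) :
    b / (exp x - 1) + b / 2 = b / (2 * tanh (x / 2)) := by
  have hne : exp x - 1 ≠ 0 := sub_ne_zero.2 fun h => hx ((exp_eq_one_iff _).1 h)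
  have hsq : exp x = exp (x / 2) ^ 2 := by rw [← exp_nat_mul]; ring_nf
  rw [tanh_eq, exp_neg]
  rw [hsq] at hne ⊢
  field_simp
  ring

lemma Phi_eq_sum_cellEnergy (β θ₁ θ₂ s : ℝ) :
    Phi β θ₁ θ₂ s =
      pP β - θ₁ * pP (β * θ₁) - θ₂ * pP (β * θ₂) - (1 - θ₂) * pP (β * (1 - θ₂))
        - (1 - θ₁) * pP (β * (1 - θ₁))
      + cellEnergy β (θ₁ * θ₂) s + cellEnergy β (θ₁ * (1 - θ₂)) (θ₁ - s)
      + cellEnergy β ((1 - θ₁) * θ₂) (θ₂ - s)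
      + cellEnergy β ((1 - θ₁) * (1 - θ₂)) (1 - θ₁ - θ₂ + s)
      + β * (θ₁ - s) * (θ₂ - s) := by
  rw [Phi, Phit, show s + (θ₁ - s) = θ₁ by ring, show s + (θ₂ - s) = θ₂ by ring,
    show θ₁ - s + (1 - θ₁ - θ₂ + s) = 1 - θ₂ by ring,
    show θ₂ - s + (1 - θ₁ - θ₂ + s) = 1 - θ₁ by ring]
  simp only [cellEnergy]
  ring

def PhiDeriv (β θ₁ θ₂ s : ℝ) : ℝ :=
  cellEnergyDeriv β (θ₁ * θ₂) s - cellEnergyDeriv β (θ₁ * (1 - θ₂)) (θ₁ - s)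
    - cellEnergyDeriv β ((1 - θ₁) * θ₂) (θ₂ - s)
    + cellEnergyDeriv β ((1 - θ₁) * (1 - θ₂)) (1 - θ₁ - θ₂ + s)
    + β * (2 * s - θ₁ - θ₂)

variable {θ₁ θ₂ s : ℝ}

lemma hasDerivAt_Phi (hβ : β ≠ 0) (hθ₁ : θ₁ ∈ Ioo (0 : ℝ) 1) (hθ₂ : θ₂ ∈ Ioo (0 : ℝ) 1)
    (h₁₁ : s ≠ 0) (h₁₂ : θ₁ - s ≠ 0) (h₂₁ : θ₂ - s ≠ 0) (h₂₂ : 1 - θ₁ - θ₂ + s ≠ 0) :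
    HasDerivAt (Phi β θ₁ θ₂) (PhiDeriv β θ₁ θ₂ s) s := by
  obtain ⟨hθ₁0, hθ₁1⟩ := hθ₁
  obtain ⟨hθ₂0, hθ₂1⟩ := hθ₂
  have hθ₁' : 0 < 1 - θ₁ := by linarith
  have hθ₂' : 0 < 1 - θ₂ := by linarith
  have e₁₁ := hasDerivAt_cellEnergy (c := θ₁ * θ₂) hβ (by positivity) h₁₁
  have e₁₂ := (hasDerivAt_cellEnergy (c := θ₁ * (1 - θ₂)) hβ (by positivity) h₁₂).comp_const_sub
    θ₁ s
  have e₂₁ := (hasDerivAt_cellEnergy (c := (1 - θ₁) * θ₂) hβ (by positivity) h₂₁).comp_const_sub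
    θ₂ s
  have e₂₂ := (hasDerivAt_cellEnergy (c := (1 - θ₁) * (1 - θ₂)) hβ (by positivity)
    h₂₂).comp_const_add (1 - θ₁ - θ₂) s
  have q := (((hasDerivAt_id s).const_sub θ₁).const_mul β).mul ((hasDerivAt_id s).const_sub θ₂)
  rw [show Phi β θ₁ θ₂ = _ from funext (Phi_eq_sum_cellEnergy β θ₁ θ₂)]
  refine ((((((hasDerivAt_const s _).add e₁₁).add e₁₂).add e₂₁).add e₂₂).add q).congr_deriv ?_
  simp only [PhiDeriv, id]
  ring

lemma hasDerivAt_PhiDeriv (hβ : β ≠ 0)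
    (h₁₁ : s ≠ 0) (h₁₂ : θ₁ - s ≠ 0) (h₂₁ : θ₂ - s ≠ 0) (h₂₂ : 1 - θ₁ - θ₂ + s ≠ 0) :
    HasDerivAt (PhiDeriv β θ₁ θ₂)
      (β / (exp (β * s) - 1) + β / (exp (β * (θ₁ - s)) - 1) + β / (exp (β * (θ₂ - s)) - 1)
        + β / (exp (β * (1 - θ₁ - θ₂ + s)) - 1) + 2 * β) s := by
  have e₁₁ := hasDerivAt_cellEnergyDeriv hβ h₁₁ (θ₁ * θ₂)
  have e₁₂ := (hasDerivAt_cellEnergyDeriv hβ h₁₂ (θ₁ * (1 - θ₂))).comp_const_sub θ₁ s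
  have e₂₁ := (hasDerivAt_cellEnergyDeriv hβ h₂₁ ((1 - θ₁) * θ₂)).comp_const_sub θ₂ s
  have e₂₂ := (hasDerivAt_cellEnergyDeriv hβ h₂₂ ((1 - θ₁) * (1 - θ₂))).comp_const_add
    (1 - θ₁ - θ₂) s
  have l := ((((hasDerivAt_id s).const_mul 2).sub_const θ₁).sub_const θ₂).const_mul β
  refine ((((e₁₁.sub e₁₂).sub e₂₁).add e₂₂).add l).congr_deriv ?_
  ring

lemma cells_pos_of_mem_Ioo (hs : s ∈ Ioo (max 0 (θ₁ + θ₂ - 1)) (min θ₁ θ₂)) :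
    0 < s ∧ 0 < θ₁ - s ∧ 0 < θ₂ - s ∧ 0 < 1 - θ₁ - θ₂ + s := by
  simp only [mem_Ioo, max_lt_iff, lt_min_iff] at hs
  refine ⟨hs.1.1, ?_, ?_, ?_⟩ <;> linarith

end FourSquare

open FourSquare

/-- The second derivative of `t ↦ Φ_β(θ₁,θ₂;t)` on the interior of `I_{θ₁,θ₂}` equals
`Σ_{i,j} β/(2 tanh(β t_{ij}/2))`. -/
theorem statement15 (β θ₁ θ₂ : ℝ) (hβ : β ≠ 0)
    (hθ₁ : θ₁ ∈ Set.Ioo (0:ℝ) 1) (hθ₂ : θ₂ ∈ Set.Ioo (0:ℝ) 1)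
    (t : ℝ) (ht : t ∈ Set.Ioo (max 0 (θ₁ + θ₂ - 1)) (min θ₁ θ₂)) :
    deriv (deriv (fun s => Phi β θ₁ θ₂ s)) t =
      β / (2 * Real.tanh (β * t / 2))
      + β / (2 * Real.tanh (β * (θ₁ - t) / 2))
      + β / (2 * Real.tanh (β * (θ₂ - t) / 2))
      + β / (2 * Real.tanh (β * (1 - θ₁ - θ₂ + t) / 2)) := by
  have hΦ : ∀ᶠ s in 𝓝 t, HasDerivAt (Phi β θ₁ θ₂) (PhiDeriv β θ₁ θ₂ s) s := by
    filter_upwards [isOpen_Ioo.mem_nhds ht] with s hs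
    obtain ⟨h₁₁, h₁₂, h₂₁, h₂₂⟩ := cells_pos_of_mem_Ioo hs
    exact hasDerivAt_Phi hβ hθ₁ hθ₂ h₁₁.ne' h₁₂.ne' h₂₁.ne' h₂₂.ne'
  obtain ⟨h₁₁, h₁₂, h₂₁, h₂₂⟩ := cells_pos_of_mem_Ioo ht
  refine (deriv_deriv_eq_of_eventually_hasDerivAt hΦ
    (hasDerivAt_PhiDeriv hβ h₁₁.ne' h₁₂.ne' h₂₁.ne' h₂₂.ne')).trans ?_
  rw [← div_exp_sub_one_add_half β (mul_ne_zero hβ h₁₁.ne'),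
    ← div_exp_sub_one_add_half β (mul_ne_zero hβ h₁₂.ne'),
    ← div_exp_sub_one_add_half β (mul_ne_zero hβ h₂₁.ne'),
    ← div_exp_sub_one_add_half β (mul_ne_zero hβ h₂₂.ne')]
  ring
end
end

section
/- Let β ≠ 0 and define R_β(θ₁,θ₂) = −(1/β) ln(1 − (1−e^{−βθ₁})(1−e^{−βθ₂})/(1−e^{−β})) and ρ_β(x,y) = β(1−e^{−β}) e^{−βx} e^{−βy} / [(1−e^{−β}) − (1−e^{−βx})(1−e^{−βy})]². Then ρ_β(x,y) > 0 for all (x,y) ∈ [0,1]², R_β(θ₁,θ₂) = ∫_{[0,θ₁]×[0,θ₂]} ρ_β(x,y) dx dy for all (θ₁,θ₂) ∈ [0,1]², and R_β(θ,1) = R_β(1,θ) = θ for all θ ∈ [0,1]; consequently ρ_β is the density of a Borel probability measure on [0,1]² with both marginals equal to Lebesgue measure. -/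
/-!
Write `g(t) = 1 - e^{-βt}` and `c = g(1)`. On `[0,1]` the ratio `g(t)/c` lies in `[0,1]`, and
`c < 1`, so the argument `1 - g(θ₁) g(θ₂)/c = (c - g(θ₁) g(θ₂))/c` of the logarithm in `R_β` is
positive on the square; this gives `ρ_β > 0` and keeps `R_β`, `P` and `ρ_β` smooth there.
Differentiating `R_β` in `θ₁` gives `P(θ₁,θ₂) = e^{-βθ₁} g(θ₂)/(c - g(θ₁) g(θ₂))`, whose
derivative in `θ₂` is `ρ_β`. Both `R_β` and `P` vanish on the axes, so Fubini and the fundamental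
theorem of calculus in each variable give `R_β` as the integral of `ρ_β` over `[0,θ₁]×[0,θ₂]`.
Finally `P(x,1) = 1`: every row of `ρ_β` has integral one, and by the symmetry of `ρ_β` so has every
column, which identifies both marginals with Lebesgue measure.
-/

open MeasureTheory Real Set

noncomputable section

/-- The limiting joint distribution function `R_β(θ₁,θ₂)`. -/
def Rfun (β θ₁ θ₂ : ℝ) : ℝ :=
  -(1 / β) * Real.log (1 - (1 - Real.exp (-β * θ₁)) * (1 - Real.exp (-β * θ₂)) /
    (1 - Real.exp (-β)))

/-- The limiting density `ρ_β(x,y)`. -/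
def rho (β x y : ℝ) : ℝ :=
  β * (1 - Real.exp (-β)) * Real.exp (-β * x) * Real.exp (-β * y) /
    ((1 - Real.exp (-β)) - (1 - Real.exp (-β * x)) * (1 - Real.exp (-β * y))) ^ 2

open scoped ENNReal

theorem setIntegral_Icc_eq_sub_of_hasDerivAt {f f' : ℝ → ℝ} {a b : ℝ} (hab : a ≤ b)
    (hderiv : ∀ x ∈ Icc a b, HasDerivAt f (f' x) x) (hint : IntegrableOn f' (Icc a b)) :
    ∫ x in Icc a b, f' x = f b - f a := by
  rw [integral_Icc_eq_integral_Ioc, ← intervalIntegral.integral_of_le hab]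
  exact intervalIntegral.integral_eq_sub_of_hasDerivAt (by rwa [uIcc_of_le hab])
    ((intervalIntegrable_iff_integrableOn_Icc_of_le hab).2 hint)

theorem setIntegral_Icc_prod_Icc_eq_sub_of_hasDerivAt {f : ℝ × ℝ → ℝ} {F F' : ℝ → ℝ}
    {a₁ b₁ a₂ b₂ : ℝ} (hab : a₁ ≤ b₁) (hf : IntegrableOn f (Icc a₁ b₁ ×ˢ Icc a₂ b₂))
    (hinner : ∀ x ∈ Icc a₁ b₁, ∫ y in Icc a₂ b₂, f (x, y) = F' x)
    (hderiv : ∀ x ∈ Icc a₁ b₁, HasDerivAt F (F' x) x) :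
    ∫ p in Icc a₁ b₁ ×ˢ Icc a₂ b₂, f p = F b₁ - F a₁ := by
  rw [Measure.volume_eq_prod] at hf ⊢
  have hF' : IntegrableOn F' (Icc a₁ b₁) := by
    rw [IntegrableOn, ← Measure.prod_restrict] at hf
    exact IntegrableOn.congr_fun hf.integral_prod_left hinner measurableSet_Icc
  rw [setIntegral_prod f hf, setIntegral_congr_fun measurableSet_Icc hinner]
  exact setIntegral_Icc_eq_sub_of_hasDerivAt hab hderiv hF'

section Marginals

variable {α γ : Type*} [MeasurableSpace α] [MeasurableSpace γ]
  (μ : Measure α) (ν : Measure γ) [SFinite μ] [SFinite ν] {f : α × γ → ℝ≥0∞}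

theorem MeasureTheory.Measure.fst_withDensity_prod_eq (hf : Measurable f)
    (h : ∀ᵐ x ∂μ, ∫⁻ y, f (x, y) ∂ν = 1) : ((μ.prod ν).withDensity f).fst = μ := by
  ext s hs
  rw [Measure.fst_apply hs, withDensity_apply _ (measurable_fst hs), ← prod_univ,
    ← Measure.prod_restrict, Measure.restrict_univ, lintegral_prod _ hf.aemeasurable,
    lintegral_congr_ae (ae_restrict_of_ae h), lintegral_one, Measure.restrict_apply_univ]

theorem MeasureTheory.Measure.snd_withDensity_prod_eq (hf : Measurable f)
    (h : ∀ᵐ y ∂ν, ∫⁻ x, f (x, y) ∂μ = 1) : ((μ.prod ν).withDensity f).snd = ν := by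
  ext t ht
  rw [Measure.snd_apply ht, withDensity_apply _ (measurable_snd ht), ← univ_prod,
    ← Measure.prod_restrict, Measure.restrict_univ, lintegral_prod_symm _ hf.aemeasurable,
    lintegral_congr_ae (ae_restrict_of_ae h), lintegral_one, Measure.restrict_apply_univ]

end Marginals

instance inst_s19 : IsProbabilityMeasure lamI := ⟨by simp [lamI]⟩

section Copula

variable {β : ℝ}

lemma mul_one_sub_exp_neg_pos (hβ : β ≠ 0) : 0 < β * (1 - exp (-β)) := by
  rcases hβ.lt_or_gt with h | h
  · exact mul_pos_of_neg_of_neg h (sub_neg.2 (one_lt_exp_iff.2 (neg_pos.2 h)))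
  · exact mul_pos h (sub_pos.2 (exp_lt_one_iff.2 (neg_neg_of_pos h)))

lemma one_sub_exp_neg_ne_zero (hβ : β ≠ 0) : 1 - exp (-β) ≠ 0 :=
  right_ne_zero_of_mul (mul_one_sub_exp_neg_pos hβ).ne'

lemma one_sub_exp_neg_mul_div_mem_Icc (hβ : β ≠ 0) {t : ℝ} (ht : t ∈ Icc (0:ℝ) 1) :
    (1 - exp (-β * t)) / (1 - exp (-β)) ∈ Icc (0:ℝ) 1 := by
  obtain ⟨ht₀, ht₁⟩ := ht
  rcases hβ.lt_or_gt with h | h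
  · have hc : 1 - exp (-β) < 0 := sub_neg.2 (one_lt_exp_iff.2 (neg_pos.2 h))
    have h₀ : 1 ≤ exp (-β * t) := one_le_exp (by nlinarith)
    have h₁ : exp (-β * t) ≤ exp (-β) := exp_le_exp.2 (by nlinarith)
    exact ⟨div_nonneg_of_nonpos (by linarith) hc.le, (div_le_one_of_neg hc).2 (by linarith)⟩
  · have hc : 0 < 1 - exp (-β) := sub_pos.2 (exp_lt_one_iff.2 (neg_neg_of_pos h))
    have h₀ : exp (-β * t) ≤ 1 := exp_le_one_iff.2 (by nlinarith)
    have h₁ : exp (-β) ≤ exp (-β * t) := exp_le_exp.2 (by nlinarith)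
    exact ⟨div_nonneg (by linarith) hc.le, (div_le_one hc).2 (by linarith)⟩

lemma one_sub_mul_div_one_sub_exp_neg_pos (hβ : β ≠ 0) {x y : ℝ} (hx : x ∈ Icc (0:ℝ) 1)
    (hy : y ∈ Icc (0:ℝ) 1) :
    0 < 1 - (1 - exp (-β * x)) * (1 - exp (-β * y)) / (1 - exp (-β)) := by
  have hc := one_sub_exp_neg_ne_zero hβ
  obtain ⟨hu₀, hu₁⟩ := one_sub_exp_neg_mul_div_mem_Icc hβ hx
  obtain ⟨hv₀, hv₁⟩ := one_sub_exp_neg_mul_div_mem_Icc hβ hy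
  set c := 1 - exp (-β)
  set u := (1 - exp (-β * x)) / c
  set v := (1 - exp (-β * y)) / c
  have hc₁ : c < 1 := sub_lt_self 1 (exp_pos _)
  have huv : (1 - exp (-β * x)) * (1 - exp (-β * y)) / c = c * (u * v) := by
    simp only [u, v]; field_simp
  rw [huv]
  rcases le_total 0 c with h | h
  · nlinarith [mul_le_one₀ hu₁ hv₀ hv₁]
  · nlinarith [mul_nonneg hu₀ hv₀]

lemma one_sub_exp_neg_sub_mul_ne_zero (hβ : β ≠ 0) {x y : ℝ} (hx : x ∈ Icc (0:ℝ) 1)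
    (hy : y ∈ Icc (0:ℝ) 1) :
    (1 - exp (-β)) - (1 - exp (-β * x)) * (1 - exp (-β * y)) ≠ 0 := by
  have hc := one_sub_exp_neg_ne_zero hβ
  have h := (one_sub_mul_div_one_sub_exp_neg_pos hβ hx hy).ne'
  rwa [one_sub_div hc, div_ne_zero_iff, and_iff_left hc] at h

lemma rho_pos (hβ : β ≠ 0) {x y : ℝ} (hx : x ∈ Icc (0:ℝ) 1) (hy : y ∈ Icc (0:ℝ) 1) :
    0 < rho β x y :=
  div_pos (mul_pos (mul_pos (mul_one_sub_exp_neg_pos hβ) (exp_pos _)) (exp_pos _))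
    (pow_two_pos_of_ne_zero (one_sub_exp_neg_sub_mul_ne_zero hβ hx hy))

lemma rho_comm (β x y : ℝ) : rho β x y = rho β y x := by
  unfold rho; ring_nf

/-- `P(θ₁,θ₂) = ∂R_β/∂θ₁`, the conditional distribution function of the second coordinate given
the first. -/
def rhoCondCdf (β x y : ℝ) : ℝ :=
  exp (-β * x) * (1 - exp (-β * y)) / ((1 - exp (-β)) - (1 - exp (-β * x)) * (1 - exp (-β * y)))

lemma hasDerivAt_one_sub_exp_neg_mul (β t : ℝ) :
    HasDerivAt (fun s => 1 - exp (-β * s)) (β * exp (-β * t)) t := by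
  refine ((((hasDerivAt_id t).const_mul (-β)).exp).const_sub 1).congr_deriv ?_
  simp only [id]
  ring

lemma hasDerivAt_rhoCondCdf (hβ : β ≠ 0) {x y : ℝ} (hx : x ∈ Icc (0:ℝ) 1)
    (hy : y ∈ Icc (0:ℝ) 1) : HasDerivAt (rhoCondCdf β x) (rho β x y) y := by
  have hD := one_sub_exp_neg_sub_mul_ne_zero hβ hx hy
  have hg := hasDerivAt_one_sub_exp_neg_mul β y
  refine ((hg.const_mul (exp (-β * x))).div
    ((hg.const_mul (1 - exp (-β * x))).const_sub (1 - exp (-β))) hD).congr_deriv ?_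
  unfold rho
  field_simp
  ring

lemma hasDerivAt_Rfun (hβ : β ≠ 0) {x y : ℝ} (hx : x ∈ Icc (0:ℝ) 1) (hy : y ∈ Icc (0:ℝ) 1) :
    HasDerivAt (fun t => Rfun β t y) (rhoCondCdf β x y) x := by
  have hc := one_sub_exp_neg_ne_zero hβ
  have harg := (one_sub_mul_div_one_sub_exp_neg_pos hβ hx hy).ne'
  refine ((((((hasDerivAt_one_sub_exp_neg_mul β x).mul_const (1 - exp (-β * y))).div_const
    (1 - exp (-β))).const_sub 1).log harg).const_mul (-(1 / β))).congr_deriv ?_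
  unfold rhoCondCdf
  field_simp

lemma continuousOn_rho (hβ : β ≠ 0) :
    ContinuousOn (fun p : ℝ × ℝ => rho β p.1 p.2) (Icc 0 1 ×ˢ Icc 0 1) := by
  unfold rho
  refine ContinuousOn.div (by fun_prop) (by fun_prop) ?_
  rintro ⟨x, y⟩ ⟨hx, hy⟩
  exact pow_ne_zero 2 (one_sub_exp_neg_sub_mul_ne_zero hβ hx hy)

lemma integral_rho_Icc (hβ : β ≠ 0) {x θ : ℝ} (hx : x ∈ Icc (0:ℝ) 1) (hθ : θ ∈ Icc (0:ℝ) 1) :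
    ∫ y in Icc 0 θ, rho β x y = rhoCondCdf β x θ := by
  have hsub : Icc 0 θ ⊆ Icc (0:ℝ) 1 := Icc_subset_Icc_right hθ.2
  have hint : IntegrableOn (fun y => rho β x y) (Icc 0 θ) :=
    ((continuousOn_rho hβ).comp (by fun_prop : Continuous fun y : ℝ => (x, y)).continuousOn
      fun y hy => ⟨hx, hsub hy⟩).integrableOn_compact isCompact_Icc
  rw [setIntegral_Icc_eq_sub_of_hasDerivAt hθ.1
    (fun y hy => hasDerivAt_rhoCondCdf hβ hx (hsub hy)) hint]
  simp [rhoCondCdf]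

lemma Rfun_eq_setIntegral_rho (hβ : β ≠ 0) {θ₁ θ₂ : ℝ} (hθ₁ : θ₁ ∈ Icc (0:ℝ) 1)
    (hθ₂ : θ₂ ∈ Icc (0:ℝ) 1) :
    Rfun β θ₁ θ₂ = ∫ p in Icc (0:ℝ) θ₁ ×ˢ Icc (0:ℝ) θ₂, rho β p.1 p.2 := by
  have hsub : Icc (0:ℝ) θ₁ ×ˢ Icc (0:ℝ) θ₂ ⊆ Icc 0 1 ×ˢ Icc 0 1 :=
    prod_mono (Icc_subset_Icc_right hθ₁.2) (Icc_subset_Icc_right hθ₂.2)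
  rw [setIntegral_Icc_prod_Icc_eq_sub_of_hasDerivAt hθ₁.1
    (((continuousOn_rho hβ).mono hsub).integrableOn_compact (isCompact_Icc.prod isCompact_Icc))
    (fun x hx => integral_rho_Icc hβ (Icc_subset_Icc_right hθ₁.2 hx) hθ₂)
    (fun x hx => hasDerivAt_Rfun hβ (Icc_subset_Icc_right hθ₁.2 hx) hθ₂)]
  simp [Rfun]

lemma Rfun_one_right (hβ : β ≠ 0) (θ : ℝ) : Rfun β θ 1 = θ := by
  rw [Rfun, mul_one, mul_div_assoc, div_self (one_sub_exp_neg_ne_zero hβ), mul_one,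
    sub_sub_cancel, log_exp]
  field_simp

lemma Rfun_comm (β x y : ℝ) : Rfun β x y = Rfun β y x := by
  rw [Rfun, Rfun, mul_comm (1 - exp (-β * x))]

lemma ae_lintegral_rho_eq_one (hβ : β ≠ 0) :
    ∀ᵐ x ∂lamI, ∫⁻ y, ENNReal.ofReal (rho β x y) ∂lamI = 1 := by
  refine (ae_restrict_iff' measurableSet_Icc).2 (Filter.Eventually.of_forall fun x hx => ?_)
  have hint : IntegrableOn (fun y => rho β x y) (Icc 0 1) :=
    ((continuousOn_rho hβ).comp (by fun_prop : Continuous fun y : ℝ => (x, y)).continuousOn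
      fun y hy => ⟨hx, hy⟩).integrableOn_compact isCompact_Icc
  have hnn : 0 ≤ᵐ[volume.restrict (Icc 0 1)] fun y => rho β x y :=
    (ae_restrict_iff' measurableSet_Icc).2
      (Filter.Eventually.of_forall fun y hy => (rho_pos hβ hx hy).le)
  have hP : rhoCondCdf β x 1 = 1 := by
    have hD : (1 - exp (-β)) - (1 - exp (-β * x)) * (1 - exp (-β))
        = exp (-β * x) * (1 - exp (-β)) := by ring
    rw [rhoCondCdf, mul_one, hD, div_self (mul_ne_zero (exp_pos _).ne' (one_sub_exp_neg_ne_zero hβ))]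
  rw [lamI, ← ofReal_integral_eq_lintegral_ofReal hint hnn,
    integral_rho_Icc hβ hx ⟨zero_le_one, le_rfl⟩, hP, ENNReal.ofReal_one]

lemma measurable_ofReal_rho (β : ℝ) :
    Measurable fun p : ℝ × ℝ => ENNReal.ofReal (rho β p.1 p.2) := by
  unfold rho; fun_prop

end Copula

/-- For `β ≠ 0`: `ρ_β > 0` on `[0,1]²`, `R_β` is the joint cumulative distribution
function of the measure with density `ρ_β`, `R_β(θ,1) = R_β(1,θ) = θ`, and consequently
`ρ_β` is the density of a Borel probability measure on `[0,1]²` with both marginals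
equal to Lebesgue measure. -/
theorem statement19 (β : ℝ) (hβ : β ≠ 0) :
    (∀ x ∈ Set.Icc (0:ℝ) 1, ∀ y ∈ Set.Icc (0:ℝ) 1, 0 < rho β x y) ∧
    (∀ θ₁ ∈ Set.Icc (0:ℝ) 1, ∀ θ₂ ∈ Set.Icc (0:ℝ) 1,
      Rfun β θ₁ θ₂ = ∫ p in Set.Icc (0:ℝ) θ₁ ×ˢ Set.Icc (0:ℝ) θ₂, rho β p.1 p.2) ∧
    (∀ θ ∈ Set.Icc (0:ℝ) 1, Rfun β θ 1 = θ ∧ Rfun β 1 θ = θ) ∧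
    IsProbabilityMeasure (lam2.withDensity (fun p => ENNReal.ofReal (rho β p.1 p.2))) ∧
    (lam2.withDensity (fun p => ENNReal.ofReal (rho β p.1 p.2))).map Prod.fst = lamI ∧
    (lam2.withDensity (fun p => ENNReal.ofReal (rho β p.1 p.2))).map Prod.snd = lamI := by
  have hrows := ae_lintegral_rho_eq_one hβ
  have hcols : ∀ᵐ y ∂lamI, ∫⁻ x, ENNReal.ofReal (rho β x y) ∂lamI = 1 := by
    filter_upwards [hrows] with y hy
    simpa only [rho_comm β y] using hy
  have hfst : (lam2.withDensity fun p => ENNReal.ofReal (rho β p.1 p.2)).fst = lamI :=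
    Measure.fst_withDensity_prod_eq lamI lamI (measurable_ofReal_rho β) hrows
  refine ⟨fun x hx y hy => rho_pos hβ hx hy, fun θ₁ h₁ θ₂ h₂ => Rfun_eq_setIntegral_rho hβ h₁ h₂,
    fun θ _ => ⟨Rfun_one_right hβ θ, Rfun_comm β 1 θ ▸ Rfun_one_right hβ θ⟩, ⟨?_⟩, hfst,
    Measure.snd_withDensity_prod_eq lamI lamI (measurable_ofReal_rho β) hcols⟩
  rw [← Measure.fst_univ, hfst, measure_univ]

end
end
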